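/- arXiv:1210.0772 — 3 statements merged into one kernel-verified Lean document; each statement's English description precedes it below -/
import Mathlib

section
/- Let C be a unary covering of a finite nonempty set U and define cl_C(X) = ⋂{S : SL(S) = S and X ⊆ S} for X ⊆ U. Then cl_C satisfies: (CLF1) X ⊆ cl_C(X) for all X ⊆ U; (CLF2) if X ⊆ Y ⊆ U then cl_C(X) ⊆ cl_C(Y); (CLF3) cl_C(cl_C(X)) = cl_C(X) for all X ⊆ U. -/
open Set

/-- A covering of a finite nonempty universe `α`: a family of nonempty subsets whose union is everything. -/
def IsCovering {α : Type*} (C : Set (Set α)) : Prop :=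
  (∀ K ∈ C, K.Nonempty) ∧ ⋃₀ C = Set.univ

/-- The second type of covering lower approximation. -/
def SL {α : Type*} (C : Set (Set α)) (X : Set α) : Set α :=
  ⋃₀ {K | K ∈ C ∧ K ⊆ X}

/-- The second type of covering upper approximation. -/
def SH {α : Type*} (C : Set (Set α)) (X : Set α) : Set α :=
  ⋃₀ {K | K ∈ C ∧ (K ∩ X).Nonempty}

/-- The minimal description of a point. -/
def Md {α : Type*} (C : Set (Set α)) (x : α) : Set (Set α) :=
  {K | K ∈ C ∧ x ∈ K ∧ ∀ S ∈ C, x ∈ S → S ⊆ K → S = K}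

/-- A covering is unary if every point has exactly one element in its minimal description. -/
def Unary {α : Type*} (C : Set (Set α)) : Prop :=
  ∀ x : α, ∃! K, K ∈ Md C x

/-- The neighborhood of a point. -/
def Nbhd {α : Type*} (C : Set (Set α)) (x : α) : Set α :=
  ⋂₀ {K | K ∈ C ∧ x ∈ K}

/-- The indiscernible neighborhood of a point. -/
def IndNbhd {α : Type*} (C : Set (Set α)) (x : α) : Set α :=
  ⋃₀ {K | K ∈ C ∧ x ∈ K}

/-- A member of the covering is reducible if it is a union of other members. -/
def Reducible {α : Type*} (C : Set (Set α)) (K : Set α) : Prop :=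
  ∃ D ⊆ C \ {K}, K = ⋃₀ D

/-- The reduct of a covering: its irreducible members. -/
def reduct {α : Type*} (C : Set (Set α)) : Set (Set α) :=
  {K | K ∈ C ∧ ¬ Reducible C K}

/-- The closure operator induced by the fixed point family of `SL`. -/
def clC {α : Type*} (C : Set (Set α)) (X : Set α) : Set α :=
  ⋂₀ {S | SL C S = S ∧ X ⊆ S}

/-
A set is a fixed point of `SL C` exactly when it is a union of members of `C`. In a finite unary
covering, the unique minimal description `K` of `x` lies inside every member of `C` containing `x`
(shrink that member to a minimal one, which must be `K`), hence inside every fixed point containing `x`.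
So `K` lies in the intersection `clC C X` of the fixed points containing `X` as soon as `x` does,
which makes `clC C X` itself a fixed point; idempotence follows.
-/

section Covering

variable {α : Type*} {C : Set (Set α)}

theorem SL_subset (C : Set (Set α)) (X : Set α) : SL C X ⊆ X :=
  sUnion_subset fun _ hK => hK.2

theorem mem_Md_of_minimal {x : α} {K : Set α} (hK : Minimal (fun S => S ∈ C ∧ x ∈ S) K) :
    K ∈ Md C x :=
  ⟨hK.prop.1, hK.prop.2, fun _ hS hxS hSK => hK.eq_of_subset ⟨hS, hxS⟩ hSK⟩

theorem exists_mem_Md_subset [Finite α] {x : α} {L : Set α} (hL : L ∈ C) (hxL : x ∈ L) :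
    ∃ K ∈ Md C x, K ⊆ L := by
  obtain ⟨K, hKL, hK⟩ := exists_minimal_le_of_wellFoundedLT (fun S => S ∈ C ∧ x ∈ S) L ⟨hL, hxL⟩
  exact ⟨K, mem_Md_of_minimal hK, hKL⟩

theorem Unary.subset_of_SL_eq [Finite α] (hU : Unary C) {x : α} {K S : Set α}
    (hK : K ∈ Md C x) (hS : SL C S = S) (hxS : x ∈ S) : K ⊆ S := by
  rw [← hS] at hxS
  obtain ⟨L, ⟨hLC, hLS⟩, hxL⟩ := hxS
  obtain ⟨K', hK', hK'L⟩ := exists_mem_Md_subset hLC hxL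
  obtain rfl : K' = K := (hU x).unique hK' hK
  exact hK'L.trans hLS

theorem Unary.SL_sInter [Finite α] (hU : Unary C) {F : Set (Set α)}
    (hF : ∀ S ∈ F, SL C S = S) : SL C (⋂₀ F) = ⋂₀ F := by
  refine (SL_subset C _).antisymm fun x hx => ?_
  obtain ⟨K, hK, -⟩ := hU x
  exact ⟨K, ⟨hK.1, subset_sInter fun S hS => hU.subset_of_SL_eq hK (hF S hS) (hx S hS)⟩, hK.2.1⟩

theorem subset_clC (C : Set (Set α)) (X : Set α) : X ⊆ clC C X :=
  subset_sInter fun _ hS => hS.2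

theorem clC_mono (C : Set (Set α)) {X Y : Set α} (hXY : X ⊆ Y) : clC C X ⊆ clC C Y :=
  sInter_subset_sInter fun _ hS => ⟨hS.1, hXY.trans hS.2⟩

theorem Unary.SL_clC [Finite α] (hU : Unary C) (X : Set α) : SL C (clC C X) = clC C X :=
  hU.SL_sInter fun _ hS => hS.1

theorem Unary.clC_clC [Finite α] (hU : Unary C) (X : Set α) : clC C (clC C X) = clC C X :=
  Subset.antisymm (fun _ hx => hx _ ⟨hU.SL_clC X, subset_rfl⟩) (subset_clC C _)

end Covering

theorem stmt_1_general {α : Type*} [Fintype α] (C : Set (Set α))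
    (hU : Unary C) :
    (∀ X : Set α, X ⊆ clC C X) ∧
    (∀ X Y : Set α, X ⊆ Y → clC C X ⊆ clC C Y) ∧
    (∀ X : Set α, clC C (clC C X) = clC C X) :=
  ⟨subset_clC C, fun _ _ => clC_mono C, hU.clC_clC⟩

theorem stmt_1 {α : Type*} [Fintype α] [Nonempty α] (C : Set (Set α))
    (hC : IsCovering C) (hU : Unary C) :
    (∀ X : Set α, X ⊆ clC C X) ∧
    (∀ X Y : Set α, X ⊆ Y → clC C X ⊆ clC C Y) ∧
    (∀ X : Set α, clC C (clC C X) = clC C X) :=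
  stmt_1_general C hU
end

section
/- Let C be a unary covering of a finite nonempty set U and define cl_C(X) = ⋂{S : SL(S) = S and X ⊆ S} for X ⊆ U. Then cl_C satisfies the matroid exchange axiom (CL4) — for all X ⊆ U and x, y ∈ U, if y ∈ cl_C(X ∪ {x}) \ cl_C(X) then x ∈ cl_C(X ∪ {y}) — if and only if the family {N(x) : x ∈ U} forms a partition of U, i.e., for all x, y ∈ U, either N(x) = N(y) or N(x) ∩ N(y) = ∅. -/
open Set

/-! When the covering is unary, every neighborhood `N(x)` is itself a member of the covering
(the unique minimal description of `x`). The `SL`-fixed sets are then exactly the sets `S` with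
`N(x) ⊆ S` for all `x ∈ S`, so `cl_C(X) = ⋃_{x ∈ X} N(x)`. In these terms the exchange axiom with
`X = ∅` says that `y ∈ N(x)` implies `x ∈ N(y)`, and conversely this symmetry gives the exchange
axiom, since `y ∈ cl_C(X ∪ {x}) \ cl_C(X)` forces `y ∈ N(x)`. Finally, as `N(x) ⊆ N(y)` iff
`x ∈ N(y)`, symmetry of the neighborhoods is equivalent to their forming a partition. -/

section Neighborhoods

variable {α : Type*} {C : Set (Set α)}

lemma mem_nbhd_self (x : α) : x ∈ Nbhd C x :=
  mem_sInter.2 fun _ hK => hK.2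

lemma nbhd_subset_of_mem {K : Set α} (hK : K ∈ C) {x : α} (hx : x ∈ K) : Nbhd C x ⊆ K :=
  sInter_subset_of_mem ⟨hK, hx⟩

lemma exists_mem_md_subset [Finite α] {x : α} {K : Set α} (hK : K ∈ C) (hx : x ∈ K) :
    ∃ M ∈ Md C x, M ⊆ K := by
  obtain ⟨M, ⟨hMC, hxM, hMK⟩, hmin⟩ := Set.Finite.exists_minimalFor (id : Set α → Set α)
    {S | S ∈ C ∧ x ∈ S ∧ S ⊆ K} (Set.toFinite _) ⟨K, hK, hx, subset_rfl⟩
  exact ⟨M, ⟨hMC, hxM, fun S hSC hxS hSM =>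
    subset_antisymm hSM (hmin ⟨hSC, hxS, hSM.trans hMK⟩ hSM)⟩, hMK⟩

lemma Unary.nbhd_mem [Finite α] (hU : Unary C) (x : α) : Nbhd C x ∈ C := by
  obtain ⟨M, hM, huniq⟩ := hU x
  suffices Nbhd C x = M from this ▸ hM.1
  refine subset_antisymm (nbhd_subset_of_mem hM.1 hM.2.1) fun z hz => mem_sInter.2 ?_
  rintro K ⟨hKC, hxK⟩
  obtain ⟨M', hM', hM'K⟩ := exists_mem_md_subset hKC hxK
  exact hM'K (huniq M' hM' ▸ hz)

variable (hN : ∀ x, Nbhd C x ∈ C)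
include hN

lemma nbhd_subset_nbhd_iff {x y : α} : Nbhd C x ⊆ Nbhd C y ↔ x ∈ Nbhd C y :=
  ⟨fun h => h (mem_nbhd_self x), nbhd_subset_of_mem (hN y)⟩

lemma SL_eq_self_iff {S : Set α} : SL C S = S ↔ ∀ x ∈ S, Nbhd C x ⊆ S := by
  have hSL : SL C S ⊆ S := sUnion_subset fun _ hK => hK.2
  constructor
  · intro hS x hx
    obtain ⟨K, ⟨hKC, hKS⟩, hxK⟩ := (hS.symm ▸ hx : x ∈ SL C S)
    exact (nbhd_subset_of_mem hKC hxK).trans hKS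
  · exact fun h => subset_antisymm hSL fun x hx => ⟨Nbhd C x, ⟨hN x, h x hx⟩, mem_nbhd_self x⟩

lemma clC_eq_biUnion_nbhd (X : Set α) : clC C X = ⋃ x ∈ X, Nbhd C x := by
  refine subset_antisymm
    (sInter_subset_of_mem ⟨?_, fun x hx => mem_biUnion hx (mem_nbhd_self x)⟩) ?_
  · refine (SL_eq_self_iff hN).2 fun y hy => ?_
    obtain ⟨x, hx, hyx⟩ := mem_iUnion₂.1 hy
    exact ((nbhd_subset_nbhd_iff hN).2 hyx).trans (subset_biUnion_of_mem hx)
  · refine iUnion₂_subset fun x hx => subset_sInter ?_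
    rintro S ⟨hS, hXS⟩
    exact (SL_eq_self_iff hN).1 hS x (hXS hx)

lemma exchange_iff_nbhd_symm :
    (∀ (X : Set α) (x y : α), y ∈ clC C (X ∪ {x}) \ clC C X → x ∈ clC C (X ∪ {y})) ↔
    ∀ x y : α, y ∈ Nbhd C x → x ∈ Nbhd C y := by
  simp_rw [clC_eq_biUnion_nbhd hN, biUnion_union, biUnion_singleton, mem_sdiff, mem_union]
  constructor
  · intro h x y hy
    simpa using h ∅ x y (by simpa using hy)
  · rintro h X x y ⟨hy | hy, hyX⟩
    · exact absurd hy hyX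
    · exact Or.inr (h x y hy)

lemma nbhd_symm_iff_pairwise_eq_or_disjoint :
    (∀ x y : α, y ∈ Nbhd C x → x ∈ Nbhd C y) ↔
    ∀ x y : α, Nbhd C x = Nbhd C y ∨ Nbhd C x ∩ Nbhd C y = ∅ := by
  have hsub := fun x y : α => nbhd_subset_nbhd_iff hN (x := x) (y := y)
  constructor
  · intro h x y
    refine or_iff_not_imp_right.2 fun hxy => ?_
    obtain ⟨z, hzx, hzy⟩ := nonempty_iff_ne_empty.2 hxy
    have hxz : Nbhd C x = Nbhd C z :=
      subset_antisymm ((hsub x z).2 (h x z hzx)) ((hsub z x).2 hzx)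
    have hyz : Nbhd C y = Nbhd C z :=
      subset_antisymm ((hsub y z).2 (h y z hzy)) ((hsub z y).2 hzy)
    exact hxz.trans hyz.symm
  · intro h x y hy
    rcases h x y with hxy | hxy
    · exact hxy ▸ mem_nbhd_self x
    · exact absurd (hxy ▸ mem_inter hy (mem_nbhd_self y)) (notMem_empty y)

end Neighborhoods

theorem stmt_4_general {α : Type*} [Fintype α] (C : Set (Set α))
    (hU : Unary C) :
    (∀ (X : Set α) (x y : α),
        y ∈ clC C (X ∪ {x}) \ clC C X → x ∈ clC C (X ∪ {y})) ↔
    (∀ x y : α, Nbhd C x = Nbhd C y ∨ Nbhd C x ∩ Nbhd C y = ∅) :=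
  (exchange_iff_nbhd_symm hU.nbhd_mem).trans (nbhd_symm_iff_pairwise_eq_or_disjoint hU.nbhd_mem)

theorem stmt_4 {α : Type*} [Fintype α] [Nonempty α] (C : Set (Set α))
    (hC : IsCovering C) (hU : Unary C) :
    (∀ (X : Set α) (x y : α),
        y ∈ clC C (X ∪ {x}) \ clC C X → x ∈ clC C (X ∪ {y})) ↔
    (∀ x y : α, Nbhd C x = Nbhd C y ∨ Nbhd C x ∩ Nbhd C y = ∅) :=
  stmt_4_general C hU
end

section
/- Let C be a covering of a finite nonempty set U. If the family {SH({x}) : x ∈ U} forms a partition of U (i.e., for all x, y ∈ U, either SH({x}) = SH({y}) or SH({x}) ∩ SH({y}) = ∅), then SH(SH(X)) = SH(X) for all X ⊆ U. -/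
open Set

/-!
`z ∈ SH C {x}` says that `x` and `z` share a block of `C`, and `SH C X` is the union of the
`SH C {x}` with `x ∈ X`. Since the covering gives `y ∈ SH C {y}`, the partition hypothesis forces
`SH C {y} = SH C {x}` whenever `y ∈ SH C {x}`; so applying `SH C` to a union of such classes
adds nothing new.
-/

section SH

variable {α : Type*} {C : Set (Set α)}

theorem mem_SH_iff {X : Set α} {z : α} : z ∈ SH C X ↔ ∃ K ∈ C, (K ∩ X).Nonempty ∧ z ∈ K := by
  simp only [SH, mem_sUnion, mem_ofPred_eq, and_assoc]

theorem mem_SH_singleton_iff {x z : α} : z ∈ SH C {x} ↔ ∃ K ∈ C, x ∈ K ∧ z ∈ K := by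
  simp only [mem_SH_iff, inter_singleton_nonempty]

theorem mem_SH_iff_exists_singleton {X : Set α} {z : α} :
    z ∈ SH C X ↔ ∃ x ∈ X, z ∈ SH C {x} := by
  simp only [mem_SH_iff, inter_singleton_nonempty]
  constructor
  · rintro ⟨K, hK, ⟨x, hxK, hxX⟩, hzK⟩
    exact ⟨x, hxX, K, hK, hxK, hzK⟩
  · rintro ⟨x, hxX, K, hK, hxK, hzK⟩
    exact ⟨K, hK, ⟨x, hxK, hxX⟩, hzK⟩

theorem self_mem_SH_singleton (hC : ⋃₀ C = univ) (x : α) : x ∈ SH C {x} := by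
  obtain ⟨K, hK, hxK⟩ := mem_sUnion.mp (hC ▸ mem_univ x)
  exact mem_SH_singleton_iff.mpr ⟨K, hK, hxK, hxK⟩

theorem subset_SH (hC : ⋃₀ C = univ) (X : Set α) : X ⊆ SH C X :=
  fun x hx => mem_SH_iff_exists_singleton.mpr ⟨x, hx, self_mem_SH_singleton hC x⟩

theorem SH_singleton_eq_of_mem (hC : ⋃₀ C = univ)
    (h : ∀ x y : α, SH C {x} = SH C {y} ∨ SH C {x} ∩ SH C {y} = ∅) {x y : α}
    (hy : y ∈ SH C {x}) : SH C {y} = SH C {x} :=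
  (h y x).resolve_right fun hdisj =>
    (eq_empty_iff_forall_notMem.mp hdisj) y ⟨self_mem_SH_singleton hC y, hy⟩

end SH

theorem stmt_8_general {α : Type*} (C : Set (Set α))
    (hC : IsCovering C)
    (h : ∀ x y : α, SH C {x} = SH C {y} ∨ SH C {x} ∩ SH C {y} = ∅) :
    ∀ X : Set α, SH C (SH C X) = SH C X := by
  intro X
  refine Subset.antisymm (fun z hz => ?_) (subset_SH hC.2 _)
  obtain ⟨y, hyX, hzy⟩ := mem_SH_iff_exists_singleton.mp hz
  obtain ⟨x, hx, hyx⟩ := mem_SH_iff_exists_singleton.mp hyX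
  rw [SH_singleton_eq_of_mem hC.2 h hyx] at hzy
  exact mem_SH_iff_exists_singleton.mpr ⟨x, hx, hzy⟩

theorem stmt_8 {α : Type*} [Fintype α] [Nonempty α] (C : Set (Set α))
    (hC : IsCovering C)
    (h : ∀ x y : α, SH C {x} = SH C {y} ∨ SH C {x} ∩ SH C {y} = ∅) :
    ∀ X : Set α, SH C (SH C X) = SH C X :=
  stmt_8_general C hC h
end
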